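/- Let λ, μ > 0 and let γ be the Gaussian probability measure on ℝ with mean 0 and variance T > 0. Suppose (u^n_t)_{n≥0} is defined on the space of finite Borel measures on ℝ by u⁰_t = e^{-(2λ+μ)t} f₀ and u^{n+1}_t = e^{-(2λ+μ)t} f₀ + ∫₀^t e^{-(2λ+μ)(t−s)} ( μ B[u^n_s, γ] + 2λ B[u^n_s, u^n_s] ) ds, where f₀ is a probability measure. Then for every t ≥ 0 and every n, u^n_t(ℝ) ≤ 1, and the sequence (u^n_t)_n is increasing in n (as measures). -/

import Mathlib

open MeasureTheory Real

/-- The uniform probability measure on `[0, 2π)`. -/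
noncomputable def thetaUnif : Measure ℝ :=
  (ENNReal.ofReal (2 * π))⁻¹ • (volume.restrict (Set.Ico 0 (2 * π)))

/-- The Kac collision map: `B[ν₁,ν₂]` is the law of `X cos θ + Y sin θ`
where `X ~ ν₁`, `Y ~ ν₂` and `θ` is uniform on `[0,2π)`, all independent. -/
noncomputable def collB (ν₁ ν₂ : Measure ℝ) : Measure ℝ :=
  Measure.map (fun p : ℝ × ℝ × ℝ => p.1 * Real.cos p.2.2 + p.2.1 * Real.sin p.2.2)
    (ν₁.prod (ν₂.prod thetaUnif))

/-!
Both claims follow by induction on `n`. Monotonicity propagates because `B` is monotone in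
both arguments and the Duhamel formula is monotone in `B`. For the mass, `‖B[ν₁,ν₂]‖ = ‖ν₁‖‖ν₂‖`
bounds the collision term by `(2λ + μ)` once `‖uⁿ_s‖ ≤ 1`, and
`e^{-ct} + ∫₀ᵗ c e^{-c(t-s)} ds = 1` with `c = 2λ + μ`.
-/

open scoped ENNReal

instance : IsProbabilityMeasure thetaUnif := by
  constructor
  simp only [thetaUnif, Measure.smul_apply, Measure.restrict_apply_univ, Real.volume_Ico,
    sub_zero, smul_eq_mul]
  exact ENNReal.inv_mul_cancel (by positivity) ENNReal.ofReal_ne_top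

lemma measurable_kacRotation :
    Measurable (fun p : ℝ × ℝ × ℝ => p.1 * Real.cos p.2.2 + p.2.1 * Real.sin p.2.2) := by
  fun_prop

lemma collB_mono {ν₁ ν₁' ν₂ ν₂' : Measure ℝ} [SFinite ν₂'] (h₁ : ν₁ ≤ ν₁') (h₂ : ν₂ ≤ ν₂') :
    collB ν₁ ν₂ ≤ collB ν₁' ν₂' :=
  Measure.map_mono (Measure.prod_mono h₁ (Measure.prod_mono h₂ le_rfl)) measurable_kacRotation

lemma collB_apply_univ (ν₁ ν₂ : Measure ℝ) [SFinite ν₂] :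
    collB ν₁ ν₂ Set.univ = ν₁ Set.univ * ν₂ Set.univ := by
  rw [collB, Measure.map_apply measurable_kacRotation MeasurableSet.univ, Set.preimage_univ,
    ← Set.univ_prod_univ, Measure.prod_prod, ← Set.univ_prod_univ, Measure.prod_prod,
    measure_univ (μ := thetaUnif), mul_one]

lemma collB_apply_univ_le_one {ν₁ ν₂ : Measure ℝ} (h₁ : ν₁ Set.univ ≤ 1) (h₂ : ν₂ Set.univ ≤ 1) :
    collB ν₁ ν₂ Set.univ ≤ 1 := by
  have : IsFiniteMeasure ν₂ := ⟨h₂.trans_lt ENNReal.one_lt_top⟩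
  rw [collB_apply_univ]
  exact mul_le_one' h₁ h₂

lemma ofReal_exp_neg_mul_le_one {c t : ℝ} (hc : 0 ≤ c) (ht : 0 ≤ t) :
    ENNReal.ofReal (Real.exp (-c * t)) ≤ 1 :=
  ENNReal.ofReal_le_one.2 (Real.exp_le_one_iff.2 (by nlinarith))

lemma lintegral_Icc_ofReal_exp_neg_mul_sub {c t : ℝ} (hc : 0 ≤ c) (ht : 0 ≤ t) :
    ∫⁻ s in Set.Icc (0 : ℝ) t, ENNReal.ofReal (Real.exp (-c * (t - s))) * ENNReal.ofReal c
      = ENNReal.ofReal (1 - Real.exp (-c * t)) := by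
  have hderiv : ∀ s ∈ Set.uIcc (0 : ℝ) t,
      HasDerivAt (fun s => Real.exp (-c * (t - s))) (Real.exp (-c * (t - s)) * c) s := by
    intro s _
    have : HasDerivAt (fun s : ℝ => -c * (t - s)) c s := by
      simpa using ((hasDerivAt_id s).const_sub t).const_mul (-c)
    simpa using this.exp
  simp_rw [← ENNReal.ofReal_mul (Real.exp_nonneg _)]
  rw [← ofReal_integral_eq_lintegral_ofReal (Continuous.integrableOn_Icc (by fun_prop))
      (Filter.Eventually.of_forall fun s => by positivity),
    integral_Icc_eq_integral_Ioc, ← intervalIntegral.integral_of_le ht,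
    intervalIntegral.integral_eq_sub_of_hasDerivAt hderiv
      (Continuous.intervalIntegrable (by fun_prop) 0 t)]
  simp

section Duhamel

variable (lam mu : ℝ) (f₀ g : Measure ℝ)

/-- The right-hand side of the recursion defining `u^{n+1}_t A`, with `v = uⁿ` and `g = γ`. -/
noncomputable def kacDuhamel (v : ℝ → Measure ℝ) (t : ℝ) (A : Set ℝ) : ℝ≥0∞ :=
  ENNReal.ofReal (Real.exp (-(2 * lam + mu) * t)) * f₀ A
    + ∫⁻ s in Set.Icc (0 : ℝ) t,
        ENNReal.ofReal (Real.exp (-(2 * lam + mu) * (t - s)))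
          * (ENNReal.ofReal mu * collB (v s) g A + ENNReal.ofReal (2 * lam) * collB (v s) (v s) A)

variable {lam mu f₀ g}

lemma kacDuhamel_mono [SFinite g] {v w : ℝ → Measure ℝ} {t : ℝ}
    (hvw : ∀ s ∈ Set.Icc 0 t, v s ≤ w s) (hw : ∀ s ∈ Set.Icc 0 t, SFinite (w s)) (A : Set ℝ) :
    kacDuhamel lam mu f₀ g v t A ≤ kacDuhamel lam mu f₀ g w t A := by
  refine add_le_add_right (setLIntegral_mono' measurableSet_Icc fun s hs => ?_) _
  have := hw s hs
  exact mul_le_mul_right (add_le_add (mul_le_mul_right (collB_mono (hvw s hs) le_rfl A) _)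
    (mul_le_mul_right (collB_mono (hvw s hs) (hvw s hs) A) _)) _

lemma kacDuhamel_univ_le_one (hlam : 0 ≤ lam) (hmu : 0 ≤ mu) (hf₀ : f₀ Set.univ ≤ 1)
    (hg : g Set.univ ≤ 1) {v : ℝ → Measure ℝ} {t : ℝ} (ht : 0 ≤ t)
    (hv : ∀ s ∈ Set.Icc 0 t, v s Set.univ ≤ 1) :
    kacDuhamel lam mu f₀ g v t Set.univ ≤ 1 := by
  set c := 2 * lam + mu
  have hc : 0 ≤ c := by positivity
  have hcollision : ∫⁻ s in Set.Icc (0 : ℝ) t,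
      ENNReal.ofReal (Real.exp (-c * (t - s)))
        * (ENNReal.ofReal mu * collB (v s) g Set.univ
          + ENNReal.ofReal (2 * lam) * collB (v s) (v s) Set.univ)
      ≤ ENNReal.ofReal (1 - Real.exp (-c * t)) := by
    rw [← lintegral_Icc_ofReal_exp_neg_mul_sub hc ht]
    refine setLIntegral_mono' measurableSet_Icc fun s hs => mul_le_mul_right ?_ _
    calc ENNReal.ofReal mu * collB (v s) g Set.univ
          + ENNReal.ofReal (2 * lam) * collB (v s) (v s) Set.univ
        ≤ ENNReal.ofReal mu * 1 + ENNReal.ofReal (2 * lam) * 1 := by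
          gcongr
          · exact collB_apply_univ_le_one (hv s hs) hg
          · exact collB_apply_univ_le_one (hv s hs) (hv s hs)
      _ = ENNReal.ofReal c := by
          rw [mul_one, mul_one, ← ENNReal.ofReal_add hmu (by positivity), add_comm]
  have hexp : Real.exp (-c * t) ≤ 1 := Real.exp_le_one_iff.2 (by nlinarith)
  calc kacDuhamel lam mu f₀ g v t Set.univ
      ≤ ENNReal.ofReal (Real.exp (-c * t)) * 1 + ENNReal.ofReal (1 - Real.exp (-c * t)) :=
        add_le_add (mul_le_mul_right hf₀ _) hcollision
    _ = 1 := by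
        rw [mul_one, ← ENNReal.ofReal_add (Real.exp_nonneg _) (by linarith)]
        simp

end Duhamel

open ProbabilityTheory in
theorem iteration_subprob_and_monotone_general
    (lam mu T : ℝ) (hlam : 0 < lam) (hmu : 0 < mu)
    (f₀ : Measure ℝ) [IsProbabilityMeasure f₀]
    (u : ℕ → ℝ → Measure ℝ)
    (h0 : ∀ t : ℝ, ∀ A : Set ℝ, MeasurableSet A →
      u 0 t A = ENNReal.ofReal (Real.exp (-(2 * lam + mu) * t)) * f₀ A)
    (hrec : ∀ n : ℕ, ∀ t : ℝ, ∀ A : Set ℝ, MeasurableSet A →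
      u (n + 1) t A = ENNReal.ofReal (Real.exp (-(2 * lam + mu) * t)) * f₀ A
        + ∫⁻ s in Set.Icc (0 : ℝ) t,
            ENNReal.ofReal (Real.exp (-(2 * lam + mu) * (t - s)))
              * (ENNReal.ofReal mu * collB (u n s) (gaussianReal 0 T.toNNReal) A
                + ENNReal.ofReal (2 * lam) * collB (u n s) (u n s) A)) :
    ∀ n : ℕ, ∀ t : ℝ, 0 ≤ t →
      u n t Set.univ ≤ 1 ∧ ∀ A : Set ℝ, MeasurableSet A → u n t A ≤ u (n + 1) t A := by
  intro n
  induction n with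
  | zero =>
    intro t ht
    refine ⟨?_, fun A hA => ?_⟩
    · rw [h0 t _ .univ, measure_univ, mul_one]
      exact ofReal_exp_neg_mul_le_one (by positivity) ht
    · rw [h0 t A hA, hrec 0 t A hA]
      exact le_self_add
  | succ n ih =>
    have hmass : ∀ s, 0 ≤ s → u (n + 1) s Set.univ ≤ 1 := fun s hs => by
      rw [hrec n s _ .univ]
      exact kacDuhamel_univ_le_one hlam.le hmu.le prob_le_one prob_le_one hs
        fun r hr => (ih r hr.1).1
    intro t ht
    refine ⟨hmass t ht, fun A hA => ?_⟩
    rw [hrec n t A hA, hrec (n + 1) t A hA]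
    exact kacDuhamel_mono (fun s hs => Measure.le_iff.2 (ih s hs.1).2)
      (fun s hs => have : IsFiniteMeasure (u (n + 1) s) :=
        ⟨(hmass s hs.1).trans_lt ENNReal.one_lt_top⟩; inferInstance) A

open ProbabilityTheory in
theorem iteration_subprob_and_monotone
    (lam mu T : ℝ) (hlam : 0 < lam) (hmu : 0 < mu) (hT : 0 < T)
    (f₀ : Measure ℝ) [IsProbabilityMeasure f₀]
    (u : ℕ → ℝ → Measure ℝ)
    (h0 : ∀ t : ℝ, ∀ A : Set ℝ, MeasurableSet A →
      u 0 t A = ENNReal.ofReal (Real.exp (-(2 * lam + mu) * t)) * f₀ A)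
    (hrec : ∀ n : ℕ, ∀ t : ℝ, ∀ A : Set ℝ, MeasurableSet A →
      u (n + 1) t A = ENNReal.ofReal (Real.exp (-(2 * lam + mu) * t)) * f₀ A
        + ∫⁻ s in Set.Icc (0 : ℝ) t,
            ENNReal.ofReal (Real.exp (-(2 * lam + mu) * (t - s)))
              * (ENNReal.ofReal mu * collB (u n s) (gaussianReal 0 T.toNNReal) A
                + ENNReal.ofReal (2 * lam) * collB (u n s) (u n s) A)) :
    ∀ n : ℕ, ∀ t : ℝ, 0 ≤ t →
      u n t Set.univ ≤ 1 ∧ ∀ A : Set ℝ, MeasurableSet A → u n t A ≤ u (n + 1) t A :=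
  iteration_subprob_and_monotone_general lam mu T hlam hmu f₀ u h0 hrec
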